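/- arXiv:0911.4643 — 5 statements merged into one kernel-verified Lean document; each statement's English description precedes it below -/
import Mathlib

section
/- Let x : [t0,t1] → ℝⁿ be a solution of the system ẋ = f(t,x) whose graph lies in 𝒲, where (V,W) is a V–W pair of the system satisfying condition (A) with constants c* > 0, c_* ∈ [0,∞] and levels w_* < w*. If V(t,x(t)) > 0 for all t ∈ (t0,t1], then V(t,x(t)) ≤ V(t0,x(t0)) + c*·[w* − W(t0,x(t0))] for all t ∈ [t0,t1]. -/
open Set Filter Topology
open scoped RealInnerProductSpace

/-- Let `x : [t0,t1] → ℝⁿ` be a solution of `ẋ = f(t,x)` whose graph lies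
in `𝒲`, where `(V,W)` is a V–W pair of the system satisfying condition (A) with constants
`c* > 0`, `c_* ≥ 0` and levels `w_* < w*`.  If `V(t,x(t)) > 0` for all `t ∈ (t0,t1]`, then
`V(t,x(t)) ≤ V(t0,x(t0)) + c*·[w* − W(t0,x(t0))]` for all `t ∈ [t0,t1]`. -/
theorem stmt0
    {n : ℕ} {Ω : Set (ℝ × EuclideanSpace ℝ (Fin n))}
    (hΩ_open : IsOpen Ω) (hΩ_conn : IsConnected Ω)
    (hΩ_proj : ∀ t : ℝ, ∃ x, (t, x) ∈ Ω)
    {f : ℝ × EuclideanSpace ℝ (Fin n) → EuclideanSpace ℝ (Fin n)}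
    (hf_cont : ContinuousOn f Ω)
    {V W : ℝ × EuclideanSpace ℝ (Fin n) → ℝ}
    -- V is a regular spatially coercive function
    (hV_C1 : ContDiff ℝ 1 V)
    (hV_zero : ∀ t : ℝ, ∃ x, V (t, x) = 0)
    (hV_coercive : ∀ t : ℝ, Tendsto (fun x => V (t, x)) (cocompact _) atTop)
    (hV_reg : ∀ t x, 0 < V (t, x) → fderiv ℝ (fun y => V (t, y)) x ≠ 0)
    -- W is a guiding function concordant with V
    (hW_C1 : ContDiffOn ℝ 1 W Ω)
    (hWV_ne : (Ω ∩ {p | 0 < V p}).Nonempty)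
    (hW_guide : ∀ p ∈ Ω, 0 < V p → 0 < fderiv ℝ W p (1, f p))
    -- condition (A)
    {wlow whigh cstar clow : ℝ}
    (hw : wlow < whigh) (hcstar : 0 < cstar) (hclow : 0 ≤ clow)
    {𝒲 : Set (ℝ × EuclideanSpace ℝ (Fin n))}
    (h𝒲_comp : ∃ p₀ ∈ {p ∈ Ω | W p ∈ Ioo wlow whigh},
        𝒲 = connectedComponentIn {p ∈ Ω | W p ∈ Ioo wlow whigh} p₀)
    (h_range : ∀ t : ℝ, ∃ x, (t, x) ∈ Ω ∧ W (t, x) = whigh)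
    (h_sub : {p | V p ≤ 0} ⊆ 𝒲)
    (hA : ∀ p ∈ 𝒲, 0 ≤ V p →
        -clow * fderiv ℝ W p (1, f p) ≤ fderiv ℝ V p (1, f p) ∧
          fderiv ℝ V p (1, f p) ≤ cstar * fderiv ℝ W p (1, f p))
    -- x is a solution on [t0, t1] whose graph lies in 𝒲
    {x : ℝ → EuclideanSpace ℝ (Fin n)} {t0 t1 : ℝ} (ht01 : t0 ≤ t1)
    (hx_sol : ∀ t ∈ Icc t0 t1, HasDerivAt x (f (t, x t)) t)
    (hx_graph : ∀ t ∈ Icc t0 t1, (t, x t) ∈ 𝒲)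
    (hx_Vpos : ∀ t ∈ Ioc t0 t1, 0 < V (t, x t)) :
    ∀ t ∈ Icc t0 t1, V (t, x t) ≤ V (t0, x t0) + cstar * (whigh - W (t0, x t0)) := by

  -- 𝒲 is contained in the defining set
  have hS : 𝒲 ⊆ {p ∈ Ω | W p ∈ Ioo wlow whigh} := by
    obtain ⟨p₀, hp₀, rfl⟩ := h𝒲_comp
    exact connectedComponentIn_subset _ _
  have hΩx : ∀ s ∈ Icc t0 t1, (s, x s) ∈ Ω := fun s hs => (hS (hx_graph s hs)).1
  have hWlt : ∀ s ∈ Icc t0 t1, W (s, x s) < whigh := fun s hs => (hS (hx_graph s hs)).2.2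
  -- derivative of the curve s ↦ (s, x s)
  have hc : ∀ s ∈ Icc t0 t1, HasDerivAt (fun u => (u, x u)) ((1 : ℝ), f (s, x s)) s :=
    fun s hs => (hasDerivAt_id s).prodMk (hx_sol s hs)
  have hWdiff : ∀ s ∈ Icc t0 t1, DifferentiableAt ℝ W (s, x s) := fun s hs =>
    ((hW_C1.differentiableOn one_ne_zero).differentiableAt (hΩ_open.mem_nhds (hΩx s hs)))
  set h : ℝ → ℝ := fun s => V (s, x s) - cstar * W (s, x s) with hh
  have hderiv : ∀ s ∈ Icc t0 t1, HasDerivAt h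
      (fderiv ℝ V (s, x s) (1, f (s, x s)) - cstar * fderiv ℝ W (s, x s) (1, f (s, x s))) s := by
    intro s hs
    have hVd := ((hV_C1.differentiable one_ne_zero (s, x s)).hasFDerivAt).comp_hasDerivAt s (hc s hs)
    have hWd := ((hWdiff s hs).hasFDerivAt).comp_hasDerivAt s (hc s hs)
    exact hVd.sub (hWd.const_mul cstar)
  have hcont : ContinuousOn h (Icc t0 t1) :=
    fun s hs => (hderiv s hs).continuousAt.continuousWithinAt
  have hanti : AntitoneOn h (Icc t0 t1) := by
    apply antitoneOn_of_deriv_nonpos (convex_Icc t0 t1) hcont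
    · intro s hs
      rw [interior_Icc] at hs
      exact (hderiv s (Ioo_subset_Icc_self hs)).differentiableAt.differentiableWithinAt
    · intro s hs
      rw [interior_Icc] at hs
      rw [(hderiv s (Ioo_subset_Icc_self hs)).deriv]
      have hV0 : 0 ≤ V (s, x s) := (hx_Vpos s ⟨hs.1, hs.2.le⟩).le
      have hAs := (hA (s, x s) (hx_graph s (Ioo_subset_Icc_self hs)) hV0).2
      linarith
  intro t ht
  have ht0 : t0 ∈ Icc t0 t1 := left_mem_Icc.mpr ht01
  have hht := hanti ht0 ht ht.1
  have hWt := hWlt t ht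
  simp only [hh] at hht
  nlinarith
end

section
/- Let x : [t0,t1] → ℝⁿ be a solution of the system ẋ = f(t,x) whose graph lies in 𝒲, where (V,W) is a V–W pair of the system satisfying condition (A) with constants c* > 0, c_* ∈ [0,∞]. Define w⁰(t) := max{W(t,x) : V(t,x) = 0}. If V(t,x(t)) > 0 for all t ∈ (t0,t1) and V(t1,x(t1)) = 0, then V(t,x(t)) ≤ (c_*/(c_*+c*))·V(t0,x(t0)) + (c_*c*/(c_*+c*))·[w⁰(t1) − W(t0,x(t0))] for all t ∈ [t0,t1]. -/
open Set Filter Topology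
open scoped RealInnerProductSpace

/-- Under condition (A) for a V–W pair, if `V(t,x(t)) > 0` on `(t0,t1)` and
`V(t1,x(t1)) = 0`, then with `w⁰(t) := max{W(t,x) : V(t,x) = 0}` one has
`V(t,x(t)) ≤ (c_*/(c_*+c*))·V(t0,x(t0)) + (c_*c*/(c_*+c*))·[w⁰(t1) − W(t0,x(t0))]`
for all `t ∈ [t0,t1]`. -/
theorem stmt1
    {n : ℕ} {Ω : Set (ℝ × EuclideanSpace ℝ (Fin n))}
    (hΩ_open : IsOpen Ω) (hΩ_conn : IsConnected Ω)
    (hΩ_proj : ∀ t : ℝ, ∃ x, (t, x) ∈ Ω)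
    {f : ℝ × EuclideanSpace ℝ (Fin n) → EuclideanSpace ℝ (Fin n)}
    (hf_cont : ContinuousOn f Ω)
    {V W : ℝ × EuclideanSpace ℝ (Fin n) → ℝ}
    -- V is a regular spatially coercive function
    (hV_C1 : ContDiff ℝ 1 V)
    (hV_zero : ∀ t : ℝ, ∃ x, V (t, x) = 0)
    (hV_coercive : ∀ t : ℝ, Tendsto (fun x => V (t, x)) (cocompact _) atTop)
    (hV_reg : ∀ t x, 0 < V (t, x) → fderiv ℝ (fun y => V (t, y)) x ≠ 0)
    -- W is a guiding function concordant with V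
    (hW_C1 : ContDiffOn ℝ 1 W Ω)
    (hWV_ne : (Ω ∩ {p | 0 < V p}).Nonempty)
    (hW_guide : ∀ p ∈ Ω, 0 < V p → 0 < fderiv ℝ W p (1, f p))
    -- condition (A)
    {wlow whigh cstar clow : ℝ}
    (hw : wlow < whigh) (hcstar : 0 < cstar) (hclow : 0 ≤ clow)
    {𝒲 : Set (ℝ × EuclideanSpace ℝ (Fin n))}
    (h𝒲_comp : ∃ p₀ ∈ {p ∈ Ω | W p ∈ Ioo wlow whigh},
        𝒲 = connectedComponentIn {p ∈ Ω | W p ∈ Ioo wlow whigh} p₀)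
    (h_range : ∀ t : ℝ, ∃ x, (t, x) ∈ Ω ∧ W (t, x) = whigh)
    (h_sub : {p | V p ≤ 0} ⊆ 𝒲)
    (hA : ∀ p ∈ 𝒲, 0 ≤ V p →
        -clow * fderiv ℝ W p (1, f p) ≤ fderiv ℝ V p (1, f p) ∧
          fderiv ℝ V p (1, f p) ≤ cstar * fderiv ℝ W p (1, f p))
    -- `w⁰(t) := max{W(t,x) : V(t,x) = 0}`
    {wup : ℝ → ℝ}
    (hwup : ∀ t : ℝ, wup t = sSup {w | ∃ x, V (t, x) = 0 ∧ w = W (t, x)})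
    -- x is a solution on [t0, t1] whose graph lies in 𝒲
    {x : ℝ → EuclideanSpace ℝ (Fin n)} {t0 t1 : ℝ} (ht01 : t0 ≤ t1)
    (hx_sol : ∀ t ∈ Icc t0 t1, HasDerivAt x (f (t, x t)) t)
    (hx_graph : ∀ t ∈ Icc t0 t1, (t, x t) ∈ 𝒲)
    (hx_Vpos : ∀ t ∈ Ioo t0 t1, 0 < V (t, x t))
    (hx_Vend : V (t1, x t1) = 0) :
    ∀ t ∈ Icc t0 t1,
      V (t, x t) ≤ clow / (clow + cstar) * V (t0, x t0)
        + clow * cstar / (clow + cstar) * (wup t1 - W (t0, x t0)) := by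

  have hΩW : 𝒲 ⊆ Ω := by
    obtain ⟨p₀, hp₀, h⟩ := h𝒲_comp
    rw [h]
    exact (connectedComponentIn_subset _ _).trans (fun p hp => hp.1)
  set v : ℝ → ℝ := fun s => V (s, x s) with hvdef
  set w : ℝ → ℝ := fun s => W (s, x s) with hwdef
  have hcurve : ∀ s ∈ Icc t0 t1,
      HasDerivAt (fun s : ℝ => ((s, x s) : ℝ × EuclideanSpace ℝ (Fin n))) (1, f (s, x s)) s :=
    fun s hs => (hasDerivAt_id s).prodMk (hx_sol s hs)
  have hv' : ∀ s ∈ Icc t0 t1,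
      HasDerivAt v (fderiv ℝ V (s, x s) (1, f (s, x s))) s := fun s hs =>
    ((hV_C1.differentiable one_ne_zero) (s, x s)).hasFDerivAt.comp_hasDerivAt s (hcurve s hs)
  have hw' : ∀ s ∈ Icc t0 t1,
      HasDerivAt w (fderiv ℝ W (s, x s) (1, f (s, x s))) s := by
    intro s hs
    have hmem : (s, x s) ∈ Ω := hΩW (hx_graph s hs)
    have hd : DifferentiableAt ℝ W (s, x s) :=
      (hW_C1.contDiffAt (hΩ_open.mem_nhds hmem)).differentiableAt one_ne_zero
    exact hd.hasFDerivAt.comp_hasDerivAt s (hcurve s hs)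
  have hA' : ∀ s ∈ Ioo t0 t1,
      -clow * fderiv ℝ W (s, x s) (1, f (s, x s)) ≤ fderiv ℝ V (s, x s) (1, f (s, x s)) ∧
      fderiv ℝ V (s, x s) (1, f (s, x s)) ≤ cstar * fderiv ℝ W (s, x s) (1, f (s, x s)) :=
    fun s hs => hA _ (hx_graph s (Ioo_subset_Icc_self hs)) (hx_Vpos s hs).le
  -- g = v + clow * w is monotone on [t0, t1]
  have hmono_g : MonotoneOn (fun s => v s + clow * w s) (Icc t0 t1) := by
    apply monotoneOn_of_deriv_nonneg (convex_Icc t0 t1)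
    · exact fun s hs =>
        (((hv' s hs).add ((hw' s hs).const_mul clow)).continuousAt).continuousWithinAt
    · rw [interior_Icc]
      exact fun s hs => (((hv' s (Ioo_subset_Icc_self hs)).add
        ((hw' s (Ioo_subset_Icc_self hs)).const_mul clow)).differentiableAt).differentiableWithinAt
    · rw [interior_Icc]
      intro s hs
      rw [HasDerivAt.deriv (f := fun s => v s + clow * w s) ((hv' s (Ioo_subset_Icc_self hs)).add
        ((hw' s (Ioo_subset_Icc_self hs)).const_mul clow))]
      linarith [(hA' s hs).1]
  -- h = cstar * w - v is monotone on [t0, t1]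
  have hmono_h : MonotoneOn (fun s => cstar * w s - v s) (Icc t0 t1) := by
    apply monotoneOn_of_deriv_nonneg (convex_Icc t0 t1)
    · exact fun s hs =>
        ((((hw' s hs).const_mul cstar).sub (hv' s hs)).continuousAt).continuousWithinAt
    · rw [interior_Icc]
      exact fun s hs => ((((hw' s (Ioo_subset_Icc_self hs)).const_mul cstar).sub
        (hv' s (Ioo_subset_Icc_self hs))).differentiableAt).differentiableWithinAt
    · rw [interior_Icc]
      intro s hs
      rw [HasDerivAt.deriv (f := fun s => cstar * w s - v s) (((hw' s (Ioo_subset_Icc_self hs)).const_mul cstar).sub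
        (hv' s (Ioo_subset_Icc_self hs)))]
      linarith [(hA' s hs).2]
  -- w t1 ≤ wup t1
  have hwup1 : w t1 ≤ wup t1 := by
    rw [hwup t1]
    have hEq : {w0 | ∃ y, V (t1, y) = 0 ∧ w0 = W (t1, y)}
        = (fun y => W (t1, y)) '' {y | V (t1, y) = 0} := by
      ext a; constructor
      · rintro ⟨y, hy, rfl⟩; exact ⟨y, hy, rfl⟩
      · rintro ⟨y, hy, rfl⟩; exact ⟨y, hy, rfl⟩
    have hbdd : BddAbove {w0 | ∃ y, V (t1, y) = 0 ∧ w0 = W (t1, y)} := by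
      rw [hEq]
      -- the zero set is compact
      have hev : ∀ᶠ y in cocompact (EuclideanSpace ℝ (Fin n)), 1 ≤ V (t1, y) :=
        (hV_coercive t1).eventually (eventually_ge_atTop 1)
      rcases mem_cocompact.mp hev with ⟨K, hK, hKs⟩
      have hclosed : IsClosed {y | V (t1, y) = 0} := by
        have : Continuous fun y => V (t1, y) :=
          (hV_C1.continuous).comp (continuous_const.prodMk continuous_id)
        exact isClosed_eq this continuous_const
      have hsubK : {y | V (t1, y) = 0} ⊆ K := by
        intro y hy
        by_contra hyK
        have := hKs hyK
        simp only [mem_setOf_eq] at hy this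
        linarith
      have hcomp : IsCompact {y | V (t1, y) = 0} := hK.of_isClosed_subset hclosed hsubK
      have hcontW : ContinuousOn (fun y => W (t1, y)) {y | V (t1, y) = 0} := by
        intro y hy
        have hmem : ((t1 : ℝ), y) ∈ Ω := hΩW (h_sub (le_of_eq hy))
        have : ContinuousAt W (t1, y) :=
          (hW_C1.continuousOn.continuousAt (hΩ_open.mem_nhds hmem))
        exact (this.comp (continuous_const.prodMk continuous_id).continuousAt).continuousWithinAt
      exact (hcomp.image_of_continuousOn hcontW).bddAbove
    exact le_csSup hbdd ⟨x t1, hx_Vend, rfl⟩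
  intro t ht
  have ht1 : t1 ∈ Icc t0 t1 := ⟨ht01, le_rfl⟩
  have ht0 : t0 ∈ Icc t0 t1 := ⟨le_rfl, ht01⟩
  have h1 : v t + clow * w t ≤ v t1 + clow * w t1 := hmono_g ht ht1 ht.2
  have h2 : cstar * w t0 - v t0 ≤ cstar * w t - v t := hmono_h ht0 ht ht.1
  have hvt1 : v t1 = 0 := hx_Vend
  have hpos : 0 < clow + cstar := by linarith
  show v t ≤ clow / (clow + cstar) * v t0 + clow * cstar / (clow + cstar) * (wup t1 - w t0)
  rw [div_mul_eq_mul_div, div_mul_eq_mul_div, ← add_div, le_div_iff₀ hpos]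
  nlinarith [mul_le_mul_of_nonneg_left h2 hclow, mul_le_mul_of_nonneg_left h1 hcstar.le,
    mul_le_mul_of_nonneg_left hwup1 (mul_nonneg hclow hcstar.le)]
end

section
/- Under conditions (d)–(g), suppose additionally that 2γ(t) + μ₋(t) > 0 for all t ∈ ℝ, that ⟨S(t)(f(t,x+y) − f(t,x)), y⟩ ≥ γ(t)⟨B(t)y,y⟩ for all (t,x,y) ∈ ℝ^{1+2n}, and that ∫_0^{±∞} (2γ(s)+μ₋(s))/max{λ⁺(s),|λ₋(s)|} ds = ±∞ together with liminf_{t→±∞} ln(max{λ⁺(t),|λ₋(t)|}) / |∫_0^t (2γ(s)+μ₋(s))/max{λ⁺(s),|λ₋(s)|} ds| < 1. Then the system ẋ = f(t,x) has at most one global solution x on ℝ with sup_{t∈ℝ} ⟨B(t)x(t),x(t)⟩ < ∞. -/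
open Set Filter Topology
open scoped RealInnerProductSpace

section auxStmt10
variable {n : ℕ}

lemma aux_posdef_stmt10 (hn : 0 < n) (B : EuclideanSpace ℝ (Fin n) →L[ℝ] EuclideanSpace ℝ (Fin n))
    (hB : ∀ x : EuclideanSpace ℝ (Fin n), x ≠ 0 → 0 < ⟪B x, x⟫) :
    ∃ c > 0, ∀ x : EuclideanSpace ℝ (Fin n), c * ‖x‖^2 ≤ ⟪B x, x⟫ := by
  haveI : Nontrivial (EuclideanSpace ℝ (Fin n)) := by
    have : 0 < Module.finrank ℝ (EuclideanSpace ℝ (Fin n)) := by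
      simp [finrank_euclideanSpace_fin, hn]
    exact Module.nontrivial_of_finrank_pos this
  have hsph : (Metric.sphere (0:EuclideanSpace ℝ (Fin n)) 1).Nonempty :=
    NormedSpace.sphere_nonempty.mpr zero_le_one
  have hcont : ContinuousOn (fun x : EuclideanSpace ℝ (Fin n) => ⟪B x, x⟫) (Metric.sphere 0 1) :=
    ((B.continuous).inner continuous_id).continuousOn
  obtain ⟨e, he, hmin⟩ := (isCompact_sphere (0:EuclideanSpace ℝ (Fin n)) 1).exists_isMinOn hsph hcont
  have hne : ‖e‖ = 1 := by simpa using he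
  have he0 : e ≠ 0 := by intro h; simp [h] at hne
  refine ⟨⟪B e, e⟫, hB e he0, fun x => ?_⟩
  rcases eq_or_ne x 0 with rfl | hx
  · simp
  · have hxn : (0:ℝ) < ‖x‖ := norm_pos_iff.mpr hx
    set v : EuclideanSpace ℝ (Fin n) := ‖x‖⁻¹ • x with hv
    have hvs : v ∈ Metric.sphere (0:EuclideanSpace ℝ (Fin n)) 1 := by
      simp [hv, norm_smul, abs_of_nonneg (inv_nonneg.mpr hxn.le), inv_mul_cancel₀ hxn.ne']
    have h1 : ⟪B e, e⟫ ≤ ⟪B v, v⟫ := hmin hvs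
    have h2 : ⟪B v, v⟫ = ‖x‖⁻¹^2 * ⟪B x, x⟫ := by
      rw [hv, map_smul, real_inner_smul_left, real_inner_smul_right]; ring
    have h3 : (0:ℝ) < ‖x‖^2 := by positivity
    have h4 : ⟪B v, v⟫ * ‖x‖^2 = ⟪B x, x⟫ := by
      rw [h2]; field_simp
    nlinarith

lemma aux_pencil_stmt10 (hn : 0 < n)
    (B A : EuclideanSpace ℝ (Fin n) →L[ℝ] EuclideanSpace ℝ (Fin n))
    (hB : ∀ x : EuclideanSpace ℝ (Fin n), x ≠ 0 → 0 < ⟪B x, x⟫) :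
    ({v | ∃ x : EuclideanSpace ℝ (Fin n), ⟪B x, x⟫ = 1 ∧ v = ⟪A x, x⟫}.Nonempty ∧
     BddAbove {v | ∃ x : EuclideanSpace ℝ (Fin n), ⟪B x, x⟫ = 1 ∧ v = ⟪A x, x⟫} ∧
     BddBelow {v | ∃ x : EuclideanSpace ℝ (Fin n), ⟪B x, x⟫ = 1 ∧ v = ⟪A x, x⟫}) ∧
    ∀ w : EuclideanSpace ℝ (Fin n),
      sInf {v | ∃ x : EuclideanSpace ℝ (Fin n), ⟪B x, x⟫ = 1 ∧ v = ⟪A x, x⟫} * ⟪B w, w⟫ ≤ ⟪A w, w⟫ ∧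
      ⟪A w, w⟫ ≤ sSup {v | ∃ x : EuclideanSpace ℝ (Fin n), ⟪B x, x⟫ = 1 ∧ v = ⟪A x, x⟫} * ⟪B w, w⟫ := by
  haveI : Nontrivial (EuclideanSpace ℝ (Fin n)) := by
    have : 0 < Module.finrank ℝ (EuclideanSpace ℝ (Fin n)) := by
      simp [finrank_euclideanSpace_fin, hn]
    exact Module.nontrivial_of_finrank_pos this
  obtain ⟨c, hc, hcb⟩ := aux_posdef_stmt10 hn B hB
  set s := {v | ∃ x : EuclideanSpace ℝ (Fin n), ⟪B x, x⟫ = 1 ∧ v = ⟪A x, x⟫} with hs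
  have hmem : ∀ w : EuclideanSpace ℝ (Fin n), w ≠ 0 → ∃ m ∈ s, m * ⟪B w, w⟫ = ⟪A w, w⟫ := by
    intro w hw
    have hb : 0 < ⟪B w, w⟫ := hB w hw
    set r : ℝ := (Real.sqrt ⟪B w, w⟫)⁻¹ with hrdef
    have hsq : Real.sqrt ⟪B w, w⟫ ^ 2 = ⟪B w, w⟫ := Real.sq_sqrt hb.le
    have hr2 : r ^ 2 * ⟪B w, w⟫ = 1 := by
      rw [hrdef, inv_pow, hsq, inv_mul_cancel₀ hb.ne']
    have h1 : ⟪B (r • w), r • w⟫ = r ^ 2 * ⟪B w, w⟫ := by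
      rw [map_smul, real_inner_smul_left, real_inner_smul_right]; ring
    have h2 : ⟪A (r • w), r • w⟫ = r ^ 2 * ⟪A w, w⟫ := by
      rw [map_smul, real_inner_smul_left, real_inner_smul_right]; ring
    refine ⟨⟪A (r • w), r • w⟫, ⟨r • w, by rw [h1, hr2], rfl⟩, ?_⟩
    calc ⟪A (r • w), r • w⟫ * ⟪B w, w⟫ = ⟪A w, w⟫ * (r ^ 2 * ⟪B w, w⟫) := by rw [h2]; ring
    _ = ⟪A w, w⟫ := by rw [hr2, mul_one]
  have hbound : ∀ v ∈ s, |v| ≤ ‖A‖ / c := by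
    rintro v ⟨x, hx1, rfl⟩
    have hx2 : c * ‖x‖ ^ 2 ≤ 1 := by rw [← hx1]; exact hcb x
    have h3 : |⟪A x, x⟫| ≤ ‖A‖ * ‖x‖ ^ 2 := by
      calc |⟪A x, x⟫| ≤ ‖A x‖ * ‖x‖ := abs_real_inner_le_norm _ _
      _ ≤ (‖A‖ * ‖x‖) * ‖x‖ := by
          have := A.le_opNorm x
          nlinarith [norm_nonneg x]
      _ = ‖A‖ * ‖x‖ ^ 2 := by ring
    have hA : (0:ℝ) ≤ ‖A‖ := norm_nonneg _
    have h4 : ‖x‖ ^ 2 ≤ 1 / c := by rw [le_div_iff₀ hc]; linarith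
    calc |⟪A x, x⟫| ≤ ‖A‖ * ‖x‖ ^ 2 := h3
    _ ≤ ‖A‖ * (1 / c) := by nlinarith
    _ = ‖A‖ / c := by ring
  have hne : s.Nonempty := by
    obtain ⟨e, he⟩ := exists_ne (0 : EuclideanSpace ℝ (Fin n))
    obtain ⟨m, hm, _⟩ := hmem e he
    exact ⟨m, hm⟩
  have hba : BddAbove s := ⟨‖A‖ / c, fun v hv => (abs_le.mp (hbound v hv)).2⟩
  have hbb : BddBelow s := ⟨-(‖A‖ / c), fun v hv => (abs_le.mp (hbound v hv)).1⟩
  refine ⟨⟨hne, hba, hbb⟩, fun w => ?_⟩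
  rcases eq_or_ne w 0 with rfl | hw
  · simp
  · obtain ⟨m, hms, hmeq⟩ := hmem w hw
    have hb := (hB w hw).le
    constructor
    · calc sInf s * ⟪B w, w⟫ ≤ m * ⟪B w, w⟫ :=
        mul_le_mul_of_nonneg_right (csInf_le hbb hms) hb
      _ = ⟪A w, w⟫ := hmeq
    · calc ⟪A w, w⟫ = m * ⟪B w, w⟫ := hmeq.symm
      _ ≤ sSup s * ⟪B w, w⟫ := mul_le_mul_of_nonneg_right (le_csSup hba hms) hb

end auxStmt10


set_option maxHeartbeats 1000000 in
/-- Under conditions (d)–(g), if moreover `2γ(t) + μ₋(t) > 0`, the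
monotonicity condition `⟨S(t)(f(t,x+y) − f(t,x)), y⟩ ≥ γ(t)⟨B(t)y,y⟩` holds, and the stated
divergence/liminf conditions hold, then `ẋ = f(t,x)` has at most one global solution with
`sup_t ⟨B(t)x(t),x(t)⟩ < ∞`. -/

theorem stmt10
    {n : ℕ}
    {f : ℝ × EuclideanSpace ℝ (Fin n) → EuclideanSpace ℝ (Fin n)} (hf_cont : Continuous f)
    {B B' S S' : ℝ → EuclideanSpace ℝ (Fin n) →L[ℝ] EuclideanSpace ℝ (Fin n)}
    (hB_deriv : ∀ t, HasDerivAt B (B' t) t) (hB'_cont : Continuous B')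
    (hS_deriv : ∀ t, HasDerivAt S (S' t) t) (hS'_cont : Continuous S')
    (hB_symm : ∀ t x y, ⟪B t x, y⟫ = ⟪x, B t y⟫)
    (hS_symm : ∀ t x y, ⟪S t x, y⟫ = ⟪x, S t y⟫)
    (hS_inv : ∀ t, Function.Bijective (S t))
    -- condition (d)
    (hB_pos : ∀ t, ∀ x : EuclideanSpace ℝ (Fin n), x ≠ 0 → 0 < ⟪B t x, x⟫)
    {Lp Lm : ℝ → Submodule ℝ (EuclideanSpace ℝ (Fin n))}
    (hLcompl : ∀ t, IsCompl (Lp t) (Lm t))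
    (hLp_inv : ∀ t, ∀ x ∈ Lp t, S t x ∈ Lp t)
    (hLm_inv : ∀ t, ∀ x ∈ Lm t, S t x ∈ Lm t)
    (hLp_pos : ∀ t, ∀ x ∈ Lp t, x ≠ 0 → 0 < ⟪S t x, x⟫)
    (hLm_neg : ∀ t, ∀ x ∈ Lm t, x ≠ 0 → ⟪S t x, x⟫ < 0)
    -- condition (e)
    {γ : ℝ → ℝ} {Γ Δ : ℝ → ℝ}
    (hγ_cont : Continuous γ) (hγ_pos : ∀ t, 0 < γ t)
    (hΓ_cont : ContinuousOn Γ (Ioi 0)) (hΔ_cont : ContinuousOn Δ (Ioi 0))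
    (hΔ_pos : ∀ v > (0:ℝ), 0 < Δ v)
    (he : ∀ (t : ℝ) (x : EuclideanSpace ℝ (Fin n)), 0 < ⟪B t x, x⟫ →
      γ t * Γ ⟪B t x, x⟫ ≤ ⟪S t (f (t, x)), x⟫ ∧
      |⟪B t (f (t, x)), x⟫| ≤ γ t * Δ ⟪B t x, x⟫)
    (hγ_int_pos : Tendsto (fun T => ∫ s in (0:ℝ)..T, γ s) atTop atTop)
    (hγ_int_neg : Tendsto (fun T => ∫ s in T..(0:ℝ), γ s) atBot atTop)
    -- characteristic values of the pencils
    {lamp lamm lampm Mf μm : ℝ → ℝ}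
    (hlamp : ∀ t, lamp t = sSup {w | ∃ x : EuclideanSpace ℝ (Fin n),
        ⟪B t x, x⟫ = 1 ∧ w = ⟪S t x, x⟫})
    (hlamm : ∀ t, lamm t = sInf {w | ∃ x : EuclideanSpace ℝ (Fin n),
        ⟪B t x, x⟫ = 1 ∧ w = ⟪S t x, x⟫})
    (hlampm : ∀ t, lampm t = sInf {w | ∃ x ∈ Lp t, x ≠ 0 ∧ w = ⟪S t x, x⟫ / ⟪B t x, x⟫})
    (hMf : ∀ t, Mf t = sSup {w | ∃ x : EuclideanSpace ℝ (Fin n),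
        ⟪B t x, x⟫ = 1 ∧ w = |⟪B' t x, x⟫|})
    (hμm : ∀ t, μm t = sInf {w | ∃ x : EuclideanSpace ℝ (Fin n),
        ⟪B t x, x⟫ = 1 ∧ w = ⟪S' t x, x⟫})
    -- condition (f)
    (hf1 : BddAbove (range lamp)) (hf2 : BddBelow (range lamm))
    (hf3 : 0 < limsup lampm atBot)
    {ξ ς : ℝ}
    (hξ_bdd : BddBelow (range fun t => μm t / γ t)) (hξ : ξ = ⨅ t, μm t / γ t)
    (hς_bdd : BddAbove (range fun t => Mf t / γ t)) (hς : ς = ⨆ t, Mf t / γ t)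
    -- condition (g)
    {v₀ : ℝ} (hv₀_pos : 0 < v₀) (hg1 : 0 < 2 * Γ v₀ + ξ * v₀)
    (hg2 : ∀ v > v₀, -ξ / 2 ≤ (Γ v - Γ v₀) / (v - v₀))
    (hg3 : Tendsto (fun T => ∫ v in v₀..T, (2 * Γ v + ξ * v) / (2 * Δ v + ς * v)) atTop atTop)
    -- additional assumptions for uniqueness
    (hpos : ∀ t, 0 < 2 * γ t + μm t)
    (hmono : ∀ (t : ℝ) (x y : EuclideanSpace ℝ (Fin n)),
      γ t * ⟪B t y, y⟫ ≤ ⟪S t (f (t, x + y) - f (t, x)), y⟫)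
    (hdiv_pos : Tendsto
      (fun T => ∫ s in (0:ℝ)..T, (2 * γ s + μm s) / max (lamp s) |lamm s|) atTop atTop)
    (hdiv_neg : Tendsto
      (fun T => ∫ s in (0:ℝ)..T, (2 * γ s + μm s) / max (lamp s) |lamm s|) atBot atBot)
    (hliminf_pos : liminf (fun t => Real.log (max (lamp t) |lamm t|) /
      abs (∫ s in (0:ℝ)..t, (2 * γ s + μm s) / max (lamp s) (abs (lamm s)))) atTop < 1)
    (hliminf_neg : liminf (fun t => Real.log (max (lamp t) |lamm t|) /
      abs (∫ s in (0:ℝ)..t, (2 * γ s + μm s) / max (lamp s) (abs (lamm s)))) atBot < 1) :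
    ∀ x y : ℝ → EuclideanSpace ℝ (Fin n),
      (∀ t : ℝ, HasDerivAt x (f (t, x t)) t) →
      (∀ t : ℝ, HasDerivAt y (f (t, y t)) t) →
      BddAbove (range fun t => ⟪B t (x t), x t⟫) →
      BddAbove (range fun t => ⟪B t (y t), y t⟫) →
      x = y := by
  
  intro x y hx hy hbx hby
  by_contra hne
  rcases Nat.eq_zero_or_pos n with hn0 | hn
  · subst hn0
    exact hne (funext fun t => Subsingleton.elim _ _)
  haveI : Nontrivial (EuclideanSpace ℝ (Fin n)) := by
    have : 0 < Module.finrank ℝ (EuclideanSpace ℝ (Fin n)) := by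
      simp [finrank_euclideanSpace_fin, hn]
    exact Module.nontrivial_of_finrank_pos this
  obtain ⟨t₀, ht₀⟩ : ∃ t, x t ≠ y t := by
    by_contra h; push_neg at h; exact hne (funext h)
  have hx_cont : Continuous x := continuous_iff_continuousAt.mpr fun t => (hx t).continuousAt
  have hy_cont : Continuous y := continuous_iff_continuousAt.mpr fun t => (hy t).continuousAt
  set w : ℝ → EuclideanSpace ℝ (Fin n) := fun t => y t - x t with hw_def
  have hw_deriv : ∀ t, HasDerivAt w (f (t, y t) - f (t, x t)) t := fun t => (hy t).sub (hx t)
  have hw_cont : Continuous w := hy_cont.sub hx_cont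
  have hBnn : ∀ t (v : EuclideanSpace ℝ (Fin n)), 0 ≤ ⟪B t v, v⟫ := by
    intro t v
    rcases eq_or_ne v 0 with rfl | h
    · simp
    · exact (hB_pos t v h).le
  have HS := fun t => aux_pencil_stmt10 hn (B t) (S t) (hB_pos t)
  have HS' := fun t => aux_pencil_stmt10 hn (B t) (S' t) (hB_pos t)
  have hSle : ∀ t (v : EuclideanSpace ℝ (Fin n)), ⟪S t v, v⟫ ≤ lamp t * ⟪B t v, v⟫ := by
    intro t v; rw [hlamp t]; exact ((HS t).2 v).2
  have hSge : ∀ t (v : EuclideanSpace ℝ (Fin n)), lamm t * ⟪B t v, v⟫ ≤ ⟪S t v, v⟫ := by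
    intro t v; rw [hlamm t]; exact ((HS t).2 v).1
  have hS'ge : ∀ t (v : EuclideanSpace ℝ (Fin n)), μm t * ⟪B t v, v⟫ ≤ ⟪S' t v, v⟫ := by
    intro t v; rw [hμm t]; exact ((HS' t).2 v).1
  -- positivity of Λ t = max (lamp t) |lamm t|
  have hΛpos : ∀ t, 0 < max (lamp t) |lamm t| := by
    intro t
    by_cases hbot : Lp t = ⊥
    · have htop : Lm t = ⊤ := by
        have h := (hLcompl t).sup_eq_top
        rwa [hbot, bot_sup_eq] at h
      obtain ⟨z, hz⟩ := exists_ne (0 : EuclideanSpace ℝ (Fin n))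
      have hzm : z ∈ Lm t := htop ▸ Submodule.mem_top
      have h1 : ⟪S t z, z⟫ < 0 := hLm_neg t z hzm hz
      have h2 := hSge t z
      have hbz : 0 < ⟪B t z, z⟫ := hB_pos t z hz
      have h3 : lamm t < 0 := by nlinarith
      calc (0:ℝ) < |lamm t| := abs_pos.mpr h3.ne
      _ ≤ max (lamp t) |lamm t| := le_max_right _ _
    · obtain ⟨p, hp, hp0⟩ := (Submodule.ne_bot_iff (Lp t)).mp hbot
      have h1 : 0 < ⟪S t p, p⟫ := hLp_pos t p hp hp0
      have h2 := hSle t p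
      have hbp : 0 < ⟪B t p, p⟫ := hB_pos t p hp0
      have h3 : 0 < lamp t := by nlinarith
      exact lt_of_lt_of_le h3 (le_max_left _ _)
  -- global upper bound C on Λ
  obtain ⟨A, hA⟩ := hf1
  obtain ⟨m, hm⟩ := hf2
  have hAub : ∀ t, lamp t ≤ A := fun t => hA ⟨t, rfl⟩
  have hmlb : ∀ t, m ≤ lamm t := fun t => hm ⟨t, rfl⟩
  have hlml : ∀ t, lamm t ≤ lamp t := by
    intro t
    rw [hlamp t, hlamm t]
    exact csInf_le_csSup (HS t).1.1 (HS t).1.2.2 (HS t).1.2.1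
  set C : ℝ := max A (-m) with hC_def
  have hΛle : ∀ t, max (lamp t) |lamm t| ≤ C := by
    intro t
    refine max_le (le_trans (hAub t) (le_max_left _ _)) (abs_le.mpr ⟨?_, ?_⟩)
    · have := hmlb t
      have : -C ≤ m := by
        have := neg_le_neg (le_max_right A (-m))
        simpa [hC_def] using this
      linarith [hmlb t]
    · exact le_trans (hlml t) (le_trans (hAub t) (le_max_left _ _))
  -- bound K on ⟪B w, w⟫
  obtain ⟨Kx, hKx⟩ := hbx
  obtain ⟨Ky, hKy⟩ := hby
  set K : ℝ := 2 * Kx + 2 * Ky with hK_def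
  have hBw : ∀ t, ⟪B t (w t), w t⟫ ≤ K := by
    intro t
    have e1 : ⟪B t (y t - x t), y t - x t⟫ + ⟪B t (y t + x t), y t + x t⟫ =
        2 * ⟪B t (x t), x t⟫ + 2 * ⟪B t (y t), y t⟫ := by
      rw [map_sub, map_add, inner_sub_left, inner_sub_right, inner_sub_right,
        inner_add_left, inner_add_right, inner_add_right]
      ring
    have e2 : 0 ≤ ⟪B t (y t + x t), y t + x t⟫ := hBnn t _
    have e3 : ⟪B t (x t), x t⟫ ≤ Kx := hKx ⟨t, rfl⟩
    have e4 : ⟪B t (y t), y t⟫ ≤ Ky := hKy ⟨t, rfl⟩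
    have : w t = y t - x t := rfl
    rw [this, hK_def]
    linarith
  -- the Lyapunov function u and its derivative
  set u : ℝ → ℝ := fun t => ⟪S t (w t), w t⟫ with hu_def
  set du : ℝ → ℝ := fun t => ⟪S t (w t), f (t, y t) - f (t, x t)⟫ +
      ⟪S' t (w t) + S t (f (t, y t) - f (t, x t)), w t⟫ with hdu_def
  have hu_deriv : ∀ t, HasDerivAt u (du t) t := by
    intro t
    have h1 : HasDerivAt (fun t => S t (w t))
        (S' t (w t) + S t (f (t, y t) - f (t, x t))) t :=
      (hS_deriv t).clm_apply (hw_deriv t)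
    exact HasDerivAt.inner ℝ h1 (hw_deriv t)
  have hdu_ge : ∀ t, (2 * γ t + μm t) * ⟪B t (w t), w t⟫ ≤ du t := by
    intro t
    have hxy : x t + w t = y t := add_sub_cancel (x t) (y t)
    have hm1 := hmono t (x t) (w t)
    rw [hxy] at hm1
    have hm2 := hS'ge t (w t)
    have hsym : ⟪S t (w t), f (t, y t) - f (t, x t)⟫ =
        ⟪S t (f (t, y t) - f (t, x t)), w t⟫ := by
      rw [hS_symm t (w t) (f (t, y t) - f (t, x t))]
      exact real_inner_comm _ _
    have hdu : du t = ⟪S t (w t), f (t, y t) - f (t, x t)⟫ +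
        (⟪S' t (w t), w t⟫ + ⟪S t (f (t, y t) - f (t, x t)), w t⟫) := by
      simp only [hdu_def]
      rw [inner_add_left]
    rw [hdu, hsym]
    have hm1' : γ t * ⟪B t (w t), w t⟫ ≤ ⟪S t (f (t, y t) - f (t, x t)), w t⟫ := by
      simpa [map_sub] using hm1
    linarith
  have hdu_nonneg : ∀ t, 0 ≤ du t := fun t =>
    le_trans (mul_nonneg (hpos t).le (hBnn t (w t))) (hdu_ge t)
  have hu_mono : Monotone u :=
    monotone_of_deriv_nonneg (fun t => (hu_deriv t).differentiableAt)
      (fun t => by rw [(hu_deriv t).deriv]; exact hdu_nonneg t)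
  have hS_cont : Continuous S := continuous_iff_continuousAt.mpr fun t => (hS_deriv t).continuousAt
  have hwf_cont : Continuous (fun t => f (t, y t) - f (t, x t)) :=
    (hf_cont.comp (continuous_id.prodMk hy_cont)).sub
      (hf_cont.comp (continuous_id.prodMk hx_cont))
  have hdu_cont : Continuous du := by
    rw [hdu_def]
    exact ((hS_cont.clm_apply hw_cont).inner hwf_cont).add
      (((hS'_cont.clm_apply hw_cont).add (hS_cont.clm_apply hwf_cont)).inner hw_cont)
  have hu_cont : Continuous u := continuous_iff_continuousAt.mpr fun t => (hu_deriv t).continuousAt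
  -- |u t| ≤ Λ t * ⟪B w, w⟫ and the key pointwise inequality
  have hu_abs : ∀ t, |u t| ≤ max (lamp t) |lamm t| * ⟪B t (w t), w t⟫ := by
    intro t
    have h1 := hSle t (w t)
    have h2 := hSge t (w t)
    have hb := hBnn t (w t)
    have h3 : lamp t ≤ max (lamp t) |lamm t| := le_max_left _ _
    have h4 : -(max (lamp t) |lamm t|) ≤ lamm t := by
      have := le_max_right (lamp t) |lamm t|
      have := neg_abs_le (lamm t)
      linarith
    rw [abs_le]
    constructor
    · have := mul_le_mul_of_nonneg_right h4 hb
      simp only [hu_def]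
      nlinarith
    · have := mul_le_mul_of_nonneg_right h3 hb
      simp only [hu_def]
      nlinarith
  have hcu : ∀ t, (2 * γ t + μm t) / max (lamp t) |lamm t| * |u t| ≤ du t := by
    intro t
    rw [div_mul_eq_mul_div, div_le_iff₀ (hΛpos t)]
    have h1 := hu_abs t
    have h2 := hdu_ge t
    have h3 := (hpos t).le
    nlinarith [hΛpos t, hBnn t (w t)]
  set UB : ℝ := C * K with hUB_def
  have hu_ub : ∀ t, |u t| ≤ UB := by
    intro t
    have h1 := hu_abs t
    have h2 := hΛle t
    have h3 := hBw t
    have h4 := hBnn t (w t)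
    have h5 := (hΛpos t).le
    nlinarith [abs_nonneg (u t)]
  -- there is a point where u ≠ 0
  obtain ⟨t₁, ht₁⟩ : ∃ t, u t ≠ 0 := by
    by_contra h
    push_neg at h
    have hw0 : w t₀ ≠ 0 := sub_ne_zero.mpr (Ne.symm ht₀)
    have h1 : 0 < du t₀ :=
      lt_of_lt_of_le (mul_pos (hpos t₀) (hB_pos t₀ _ hw0)) (hdu_ge t₀)
    have h2 : HasDerivAt u 0 t₀ := by
      have hu0 : u = fun _ => 0 := funext h
      rw [hu0]; exact hasDerivAt_const _ _
    have := (hu_deriv t₀).unique h2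
    linarith
  -- integrability of the comparison function on all intervals
  have hint : ∀ a b : ℝ, IntervalIntegrable (fun s => (2 * γ s + μm s) / max (lamp s) |lamm s|) MeasureTheory.volume a b := by
    intro a b
    obtain ⟨Tp, hTp1, hTp2⟩ :=
      ((hdiv_pos.eventually (eventually_ge_atTop 1)).and (eventually_ge_atTop (max a b))).exists
    obtain ⟨Tm, hTm1, hTm2⟩ :=
      ((hdiv_neg.eventually (eventually_le_atBot (-1))).and (eventually_le_atBot (min a b))).exists
    have hip : IntervalIntegrable (fun s => (2 * γ s + μm s) / max (lamp s) |lamm s|) MeasureTheory.volume 0 Tp := by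
      by_contra h
      rw [intervalIntegral.integral_undef h] at hTp1
      norm_num at hTp1
    have him : IntervalIntegrable (fun s => (2 * γ s + μm s) / max (lamp s) |lamm s|) MeasureTheory.volume 0 Tm := by
      by_contra h
      rw [intervalIntegral.integral_undef h] at hTm1
      norm_num at hTm1
    have hTmp : IntervalIntegrable (fun s => (2 * γ s + μm s) / max (lamp s) |lamm s|) MeasureTheory.volume Tm Tp :=
      him.symm.trans hip
    refine hTmp.mono_set (Set.uIcc_subset_uIcc ?_ ?_)
    · rw [Set.uIcc_of_le (by linarith [min_le_left a b, le_max_left a b] : Tm ≤ Tp)]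
      exact ⟨by linarith [min_le_left a b], by linarith [le_max_left a b]⟩
    · rw [Set.uIcc_of_le (by linarith [min_le_left a b, le_max_left a b] : Tm ≤ Tp)]
      exact ⟨by linarith [min_le_right a b], by linarith [le_max_right a b]⟩
  have hGadd : ∀ a b : ℝ, (∫ s in a..b, (2 * γ s + μm s) / max (lamp s) |lamm s|) =
      (∫ s in (0:ℝ)..b, (2 * γ s + μm s) / max (lamp s) |lamm s|) - (∫ s in (0:ℝ)..a, (2 * γ s + μm s) / max (lamp s) |lamm s|) := by
    intro a b
    have h1 := intervalIntegral.integral_add_adjacent_intervals (hint 0 a) (hint a b)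
    linarith
  rcases lt_or_gt_of_ne ht₁ with hneg | hposu
  · -- u t₁ < 0 : blow-up at -∞
    have huneg : ∀ t, t ≤ t₁ → u t < 0 := fun t ht => lt_of_le_of_lt (hu_mono ht) hneg
    obtain ⟨T, hT1, hT2⟩ :=
      ((hdiv_neg.eventually (eventually_le_atBot
        ((∫ s in (0:ℝ)..t₁, (2 * γ s + μm s) / max (lamp s) |lamm s|) - (Real.log UB + 1 - Real.log (-u t₁))))).and
        (eventually_le_atBot t₁)).exists
    have hL : ∀ t ∈ Set.uIcc T t₁, HasDerivAt (fun t => Real.log (-u t)) (du t / u t) t := by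
      intro t ht
      rw [Set.uIcc_of_le hT2] at ht
      have hut : u t < 0 := huneg t ht.2
      have h1 : HasDerivAt (fun t => -u t) (-du t) t := (hu_deriv t).neg
      have h2 := h1.log (neg_ne_zero.mpr hut.ne)
      simpa [neg_div_neg_eq] using h2
    have hi2 : IntervalIntegrable (fun t => du t / u t) MeasureTheory.volume T t₁ := by
      apply ContinuousOn.intervalIntegrable
      apply ContinuousOn.div hdu_cont.continuousOn hu_cont.continuousOn
      intro t ht
      rw [Set.uIcc_of_le hT2] at ht
      exact (huneg t ht.2).ne
    have hftc : (∫ t in T..t₁, du t / u t) = Real.log (-u t₁) - Real.log (-u T) :=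
      intervalIntegral.integral_eq_sub_of_hasDerivAt hL hi2
    have hmono_int : (∫ t in T..t₁, (2 * γ t + μm t) / max (lamp t) |lamm t|) ≤
        ∫ t in T..t₁, -(du t / u t) := by
      apply intervalIntegral.integral_mono_on hT2 (hint T t₁) hi2.neg
      intro t ht
      have hut : u t < 0 := huneg t ht.2
      have h3 : du t / u t ≤ -((2 * γ t + μm t) / max (lamp t) |lamm t|) := by
        rw [div_le_iff_of_neg hut]
        have h1 := hcu t
        rw [abs_of_neg hut] at h1
        linarith
      simp only [Pi.neg_apply]
      linarith
    have hneg_int : (∫ t in T..t₁, -(du t / u t)) = -(∫ t in T..t₁, du t / u t) :=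
      intervalIntegral.integral_neg
    have hG := hGadd T t₁
    have hlogub : Real.log (-u T) ≤ Real.log UB :=
      Real.log_le_log (neg_pos.mpr (huneg T hT2)) (le_trans (neg_le_abs _) (hu_ub T))
    rw [hneg_int, hftc, hG] at hmono_int
    linarith
  · -- u t₁ > 0 : blow-up at +∞
    have hupos : ∀ t, t₁ ≤ t → 0 < u t := fun t ht => lt_of_lt_of_le hposu (hu_mono ht)
    obtain ⟨T, hT1, hT2⟩ :=
      ((hdiv_pos.eventually (eventually_ge_atTop
        (Real.log UB + 1 + (∫ s in (0:ℝ)..t₁, (2 * γ s + μm s) / max (lamp s) |lamm s|) - Real.log (u t₁)))).and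
        (eventually_ge_atTop t₁)).exists
    have hL : ∀ t ∈ Set.uIcc t₁ T, HasDerivAt (fun t => Real.log (u t)) (du t / u t) t := by
      intro t ht
      rw [Set.uIcc_of_le hT2] at ht
      exact (hu_deriv t).log (hupos t ht.1).ne'
    have hi2 : IntervalIntegrable (fun t => du t / u t) MeasureTheory.volume t₁ T := by
      apply ContinuousOn.intervalIntegrable
      apply ContinuousOn.div hdu_cont.continuousOn hu_cont.continuousOn
      intro t ht
      rw [Set.uIcc_of_le hT2] at ht
      exact (hupos t ht.1).ne'
    have hftc : (∫ t in t₁..T, du t / u t) = Real.log (u T) - Real.log (u t₁) :=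
      intervalIntegral.integral_eq_sub_of_hasDerivAt hL hi2
    have hmono_int : (∫ t in t₁..T, (2 * γ t + μm t) / max (lamp t) |lamm t|) ≤ ∫ t in t₁..T, du t / u t := by
      apply intervalIntegral.integral_mono_on hT2 (hint t₁ T) hi2
      intro t ht
      have hut : 0 < u t := hupos t ht.1
      rw [le_div_iff₀ hut]
      have h1 := hcu t
      rw [abs_of_pos hut] at h1
      linarith
    have hG := hGadd t₁ T
    have hlogub : Real.log (u T) ≤ Real.log UB :=
      Real.log_le_log (hupos T hT2) (le_trans (le_abs_self _) (hu_ub T))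
    rw [hftc] at hmono_int
    rw [hG] at hmono_int
    linarith
end

section
/- If the Lagrangian L(t,q,q̇) = ½⟨𝒜(t,q)q̇,q̇⟩ + ⟨a(t,q),q̇⟩ + Φ(t,q) satisfies assumptions (α)–(δ) with Ψ = Φ (in particular Φ takes values in [0,∞)), then the global solution q_* provided by the existence theorem satisfies sup_{t∈ℝ} |L(t,q_*(t),q̇_*(t))| < ∞. -/
open Set Filter Topology
open scoped RealInnerProductSpace

/-- The natural Lagrangian `L(t,q,q̇) = ½⟨𝒜(t,q)q̇,q̇⟩ + ⟨a(t,q),q̇⟩ + Φ(t,q)`. -/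
noncomputable def lagrangian {m : ℕ}
    (𝒜 : ℝ × EuclideanSpace ℝ (Fin m) → EuclideanSpace ℝ (Fin m) →L[ℝ] EuclideanSpace ℝ (Fin m))
    (a : ℝ × EuclideanSpace ℝ (Fin m) → EuclideanSpace ℝ (Fin m))
    (Φ : ℝ × EuclideanSpace ℝ (Fin m) → ℝ)
    (t : ℝ) (q v : EuclideanSpace ℝ (Fin m)) : ℝ :=
  1 / 2 * ⟪𝒜 (t, q) v, v⟫ + ⟪a (t, q), v⟫ + Φ (t, q)

/-- **Statement 14.** If assumptions (α)–(δ) hold with `Ψ = Φ` (so `Φ ≥ 0`), then the global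
solution `q_*` provided by the existence theorem (i.e. any global solution along which
`½⟨𝒜q̇,q̇⟩ + Φ` is bounded) satisfies `sup_t |L(t,q_*(t),q̇_*(t))| < ∞`. -/
theorem stmt14
    {m : ℕ}
    {𝒜 : ℝ × EuclideanSpace ℝ (Fin m) → EuclideanSpace ℝ (Fin m) →L[ℝ] EuclideanSpace ℝ (Fin m)}
    {a : ℝ × EuclideanSpace ℝ (Fin m) → EuclideanSpace ℝ (Fin m)}
    {Φ : ℝ × EuclideanSpace ℝ (Fin m) → ℝ}
    (h𝒜_C2 : ContDiff ℝ 2 𝒜) (ha_C2 : ContDiff ℝ 2 a) (hΦ_C2 : ContDiff ℝ 2 Φ)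
    (h𝒜_symm : ∀ p x y, ⟪𝒜 p x, y⟫ = ⟪x, 𝒜 p y⟫)
    (h𝒜_pos : ∀ p, ∀ x : EuclideanSpace ℝ (Fin m), x ≠ 0 → 0 < ⟪𝒜 p x, x⟫)
    -- Ψ = Φ, in particular Φ takes values in [0,∞)
    (hΦ_nonneg : ∀ p, 0 ≤ Φ p)
    {κ R K θ : ℝ} (hκ : 0 < κ) (hR : 0 < R) (hK : 0 < K) (hθ : θ ∈ Icc (0:ℝ) 1)
    -- assumption (α) with Ψ = Φ
    (hα : ∀ (t : ℝ) (q v : EuclideanSpace ℝ (Fin m)),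
      R ≤ 1 / 2 * ⟪𝒜 (t, q) v, v⟫ + Φ (t, q) →
      κ * (1 / 2 * ⟪𝒜 (t, q) v, v⟫ + Φ (t, q)) ≤
        fderiv ℝ (fun y => lagrangian 𝒜 a Φ t y v) q q +
        fderiv ℝ (fun u => lagrangian 𝒜 a Φ t q u) v v)
    -- assumption (β) with Ψ = Φ
    {Θlow Θup : ℝ → ℝ}
    (hΘlow_mono : Monotone Θlow) (hΘup_mono : Monotone Θup)
    (hΘlow_coer : Tendsto Θlow atTop atTop) (hΘup_coer : Tendsto Θup atTop atTop)
    (hβ : ∀ (t : ℝ) (q : EuclideanSpace ℝ (Fin m)),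
      Θlow (Φ (t, q)) ≤ ⟪𝒜 (t, q) q, q⟫ ∧ ⟪𝒜 (t, q) q, q⟫ ≤ Θup (Φ (t, q)))
    -- assumption (γ) with Ψ = Φ
    (hγ : ∀ (t : ℝ) (q v : EuclideanSpace ℝ (Fin m)),
      R ≤ 1 / 2 * ⟪𝒜 (t, q) v, v⟫ + Φ (t, q) →
      |1 / 2 * ⟪deriv (fun s => 𝒜 (s, q)) t v, v⟫ +
          fderiv ℝ (fun y => Φ (t, y) + Φ (t, y)) q v +
          deriv (fun s => Φ (s, q)) t| ≤
        K * (1 / 2 * ⟪𝒜 (t, q) v, v⟫ + Φ (t, q)) ^ (θ + 1))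
    -- assumption (δ) with Ψ = Φ
    {Ξ : ℝ → ℝ} (hΞ_mono : Monotone Ξ) (hΞ_nonneg : ∀ s, 0 ≤ Ξ s)
    (hδ : ∀ (t : ℝ) (q y : EuclideanSpace ℝ (Fin m)), ‖y‖ = 1 →
      |⟪a (t, q), y⟫| ≤ Ξ (Φ (t, q)) * Real.sqrt ⟪𝒜 (t, q) y, y⟫)
    -- q_* : the (V-bounded) global solution provided by the existence theorem
    {q q' : ℝ → EuclideanSpace ℝ (Fin m)}
    (hq : ∀ t : ℝ, HasDerivAt q (q' t) t)
    (hEL : ∀ t : ℝ, HasDerivAt (fun u => 𝒜 (u, q u) (q' u) + a (u, q u))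
      (gradient (fun y => lagrangian 𝒜 a Φ t y (q' t)) (q t)) t)
    (hVbdd : BddAbove (range fun t => 1 / 2 * ⟪𝒜 (t, q t) (q' t), q' t⟫ + Φ (t, q t))) :
    BddAbove (range fun t => |lagrangian 𝒜 a Φ t (q t) (q' t)|) := by
  obtain ⟨M, hM⟩ := hVbdd
  have hM' : ∀ t : ℝ, 1 / 2 * ⟪𝒜 (t, q t) (q' t), q' t⟫ + Φ (t, q t) ≤ M := by
    intro t; exact hM ⟨t, rfl⟩
  refine ⟨M + Ξ M * Real.sqrt (2 * M), ?_⟩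
  rintro x ⟨t, rfl⟩
  set p := (t, q t) with hp
  set v := q' t with hvdef
  have hkin : 0 ≤ ⟪𝒜 p v, v⟫ := by
    rcases eq_or_ne v 0 with h | h
    · simp [h]
    · exact (h𝒜_pos p v h).le
  have hΦ : 0 ≤ Φ p := hΦ_nonneg p
  have hMt := hM' t
  have hMnn : (0:ℝ) ≤ M := by nlinarith
  have hΦM : Φ p ≤ M := by nlinarith
  have hkinM : ⟪𝒜 p v, v⟫ ≤ 2 * M := by nlinarith
  have ha : |⟪a p, v⟫| ≤ Ξ (Φ p) * Real.sqrt ⟪𝒜 p v, v⟫ := by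
    rcases eq_or_ne v 0 with h | h
    · rw [h, inner_zero_right, abs_zero]
      exact mul_nonneg (hΞ_nonneg _) (Real.sqrt_nonneg _)
    · have hvn : (0:ℝ) < ‖v‖ := norm_pos_iff.2 h
      have hy : ‖(‖v‖⁻¹ • v : EuclideanSpace ℝ (Fin m))‖ = 1 := by
        simp [norm_smul, inv_mul_cancel₀ hvn.ne']
      have hd := hδ t (q t) (‖v‖⁻¹ • v) hy
      have e1 : ⟪a p, ‖v‖⁻¹ • v⟫ = ‖v‖⁻¹ * ⟪a p, v⟫ := real_inner_smul_right _ _ _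
      have e2 : ⟪𝒜 p (‖v‖⁻¹ • v), ‖v‖⁻¹ • v⟫ = ‖v‖⁻¹ * ‖v‖⁻¹ * ⟪𝒜 p v, v⟫ := by
        rw [map_smul, real_inner_smul_left, real_inner_smul_right]
        ring
      rw [e1, e2] at hd
      have e3 : Real.sqrt (‖v‖⁻¹ * ‖v‖⁻¹ * ⟪𝒜 p v, v⟫)
          = ‖v‖⁻¹ * Real.sqrt ⟪𝒜 p v, v⟫ := by
        rw [Real.sqrt_mul (by positivity),
          Real.sqrt_mul_self (by positivity : (0:ℝ) ≤ ‖v‖⁻¹)]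
      rw [e3, abs_mul, abs_of_pos (by positivity : (0:ℝ) < ‖v‖⁻¹)] at hd
      set s := Real.sqrt ⟪𝒜 p v, v⟫ with hs
      have key := mul_le_mul_of_nonneg_left hd hvn.le
      have l : ‖v‖ * (‖v‖⁻¹ * |⟪a p, v⟫|) = |⟪a p, v⟫| := by
        field_simp
      have r : ‖v‖ * (Ξ (Φ p) * (‖v‖⁻¹ * s)) = Ξ (Φ p) * s := by
        field_simp
      rw [l, r] at key
      exact key
  have ha2 : |⟪a p, v⟫| ≤ Ξ M * Real.sqrt (2 * M) :=
    ha.trans (mul_le_mul (hΞ_mono hΦM) (Real.sqrt_le_sqrt hkinM)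
      (Real.sqrt_nonneg _) (hΞ_nonneg _))
  have habs := abs_le.mp ha2
  have hB : 0 ≤ Ξ M * Real.sqrt (2 * M) :=
    mul_nonneg (hΞ_nonneg _) (Real.sqrt_nonneg _)
  simp only [lagrangian]
  rw [abs_le]
  constructor <;> nlinarith [habs.1, habs.2]
end

section
/- Suppose there exist θ ∈ [0,1] and nonnegative numbers c₃,…,c₈ such that for all (t,q) ∈ ℝ^{1+m}: max_{‖y‖=1} |⟨(∂𝒜/∂t)(t,q)y,y⟩| / ⟨𝒜(t,q)y,y⟩ ≤ c₃·Ψ(t,q)^θ + c₄; max_{‖y‖=1} |Σᵢ ∂(Φ+Ψ)/∂qᵢ(t,q)·yᵢ| / √⟨𝒜(t,q)y,y⟩ ≤ c₅·Ψ(t,q)^{θ+1/2} + c₆; and |(∂Ψ/∂t)(t,q)| ≤ c₇·Ψ(t,q)^{θ+1} + c₈. Then assumption (γ) holds for any R > 0 with K = c₃ + √2·c₅ + c₇ + R^{−θ}·(c₄ + √2·R^{−1/2}·c₆ + R^{−1}·c₈). -/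
open Set Filter Topology
open scoped RealInnerProductSpace

/-- **Statement 16.** If the growth conditions with constants `c₃,…,c₈` hold, then
assumption (γ) holds for any `R > 0` with
`K = c₃ + √2·c₅ + c₇ + R^{−θ}(c₄ + √2·R^{−1/2}·c₆ + R^{−1}·c₈)`. -/
theorem stmt16
    {m : ℕ}
    {𝒜 : ℝ × EuclideanSpace ℝ (Fin m) → EuclideanSpace ℝ (Fin m) →L[ℝ] EuclideanSpace ℝ (Fin m)}
    {a : ℝ × EuclideanSpace ℝ (Fin m) → EuclideanSpace ℝ (Fin m)}
    {Φ : ℝ × EuclideanSpace ℝ (Fin m) → ℝ}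
    (h𝒜_C2 : ContDiff ℝ 2 𝒜) (ha_C2 : ContDiff ℝ 2 a) (hΦ_C2 : ContDiff ℝ 2 Φ)
    (h𝒜_symm : ∀ p x y, ⟪𝒜 p x, y⟫ = ⟪x, 𝒜 p y⟫)
    (h𝒜_pos : ∀ p, ∀ x : EuclideanSpace ℝ (Fin m), x ≠ 0 → 0 < ⟪𝒜 p x, x⟫)
    {Ψ : ℝ × EuclideanSpace ℝ (Fin m) → ℝ} (hΨ_C1 : ContDiff ℝ 1 Ψ)
    (hΨ_nonneg : ∀ p, 0 ≤ Ψ p)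
    {θ : ℝ} (hθ : θ ∈ Icc (0:ℝ) 1)
    {c₃ c₄ c₅ c₆ c₇ c₈ : ℝ}
    (hc₃ : 0 ≤ c₃) (hc₄ : 0 ≤ c₄) (hc₅ : 0 ≤ c₅) (hc₆ : 0 ≤ c₆) (hc₇ : 0 ≤ c₇) (hc₈ : 0 ≤ c₈)
    -- growth condition on ∂𝒜/∂t
    (h1 : ∀ (t : ℝ) (q y : EuclideanSpace ℝ (Fin m)), ‖y‖ = 1 →
      |⟪deriv (fun s => 𝒜 (s, q)) t y, y⟫| ≤
        (c₃ * Ψ (t, q) ^ θ + c₄) * ⟪𝒜 (t, q) y, y⟫)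
    -- growth condition on ∂(Φ+Ψ)/∂q
    (h2 : ∀ (t : ℝ) (q y : EuclideanSpace ℝ (Fin m)), ‖y‖ = 1 →
      |fderiv ℝ (fun z => Φ (t, z) + Ψ (t, z)) q y| ≤
        (c₅ * Ψ (t, q) ^ (θ + 1 / 2) + c₆) * Real.sqrt ⟪𝒜 (t, q) y, y⟫)
    -- growth condition on ∂Ψ/∂t
    (h3 : ∀ (t : ℝ) (q : EuclideanSpace ℝ (Fin m)),
      |deriv (fun s => Ψ (s, q)) t| ≤ c₇ * Ψ (t, q) ^ (θ + 1) + c₈)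
    {R : ℝ} (hR : 0 < R) :
    -- conclusion: assumption (γ) with the stated constant K
    ∀ (t : ℝ) (q v : EuclideanSpace ℝ (Fin m)),
      R ≤ 1 / 2 * ⟪𝒜 (t, q) v, v⟫ + Ψ (t, q) →
      |1 / 2 * ⟪deriv (fun s => 𝒜 (s, q)) t v, v⟫ +
          fderiv ℝ (fun y => Φ (t, y) + Ψ (t, y)) q v +
          deriv (fun s => Ψ (s, q)) t| ≤
        (c₃ + Real.sqrt 2 * c₅ + c₇ +
            R ^ (-θ) * (c₄ + Real.sqrt 2 * R ^ (-(1:ℝ)/2) * c₆ + R⁻¹ * c₈)) *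
          (1 / 2 * ⟪𝒜 (t, q) v, v⟫ + Ψ (t, q)) ^ (θ + 1) := by
  intro t q v hE
  set Dt := deriv (fun s => 𝒜 (s, q)) t with hDt
  set f := fderiv ℝ (fun y => Φ (t, y) + Ψ (t, y)) q with hf
  set Ψt := Ψ (t, q) with hΨt
  set A' : ℝ := ⟪𝒜 (t, q) v, v⟫ with hA'
  set e : ℝ := 1 / 2 * A' + Ψt with he
  have hΨ0 : 0 ≤ Ψt := hΨ_nonneg _
  have hA0 : 0 ≤ A' := by
    rcases eq_or_ne v 0 with rfl | hv
    · simp [hA']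
    · exact (h𝒜_pos _ v hv).le
  have he0 : 0 < e := lt_of_lt_of_le hR hE
  have hC1 : 0 ≤ c₃ * Ψt ^ θ + c₄ := by positivity
  have hC2 : 0 ≤ c₅ * Ψt ^ (θ + 1 / 2) + c₆ := by positivity
  -- Bound 1: |⟪Dt v, v⟫| ≤ (c₃ Ψ^θ + c₄) A'
  have hB1 : |⟪Dt v, v⟫| ≤ (c₃ * Ψt ^ θ + c₄) * A' := by
    rcases eq_or_ne v 0 with rfl | hv
    · simp [hA']
    · have hc : (0:ℝ) < ‖v‖ := norm_pos_iff.mpr hv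
      have hy : ‖(‖v‖⁻¹ • v : EuclideanSpace ℝ (Fin m))‖ = 1 := by
        rw [norm_smul, norm_inv, norm_norm, inv_mul_cancel₀ hc.ne']
      have key := h1 t q (‖v‖⁻¹ • v) hy
      simp only [map_smul, real_inner_smul_left, real_inner_smul_right, smul_eq_mul,
        abs_mul, abs_inv, abs_norm, ← hDt, ← hΨt, ← hA'] at key
      have h1' : ‖v‖⁻¹ * (‖v‖⁻¹ * |⟪Dt v, v⟫|) ≤
          (c₃ * Ψt ^ θ + c₄) * (‖v‖⁻¹ * (‖v‖⁻¹ * A')) := key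
      calc |⟪Dt v, v⟫| = ‖v‖ * (‖v‖ * (‖v‖⁻¹ * (‖v‖⁻¹ * |⟪Dt v, v⟫|))) := by
            field_simp
            try ring
        _ ≤ ‖v‖ * (‖v‖ * ((c₃ * Ψt ^ θ + c₄) * (‖v‖⁻¹ * (‖v‖⁻¹ * A')))) := by
            gcongr
        _ = (c₃ * Ψt ^ θ + c₄) * A' := by field_simp; try ring
  -- Bound 2: |f v| ≤ (c₅ Ψ^(θ+1/2) + c₆) √A'
  have hB2 : |f v| ≤ (c₅ * Ψt ^ (θ + 1 / 2) + c₆) * Real.sqrt A' := by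
    rcases eq_or_ne v 0 with rfl | hv
    · simp only [map_zero, abs_zero]
      positivity
    · have hc : (0:ℝ) < ‖v‖ := norm_pos_iff.mpr hv
      have hy : ‖(‖v‖⁻¹ • v : EuclideanSpace ℝ (Fin m))‖ = 1 := by
        rw [norm_smul, norm_inv, norm_norm, inv_mul_cancel₀ hc.ne']
      have key := h2 t q (‖v‖⁻¹ • v) hy
      have hsq : Real.sqrt (‖v‖⁻¹ * (‖v‖⁻¹ * A')) = ‖v‖⁻¹ * Real.sqrt A' := by
        rw [show ‖v‖⁻¹ * (‖v‖⁻¹ * A') = (‖v‖⁻¹)^2 * A' by ring,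
          Real.sqrt_mul (sq_nonneg _), Real.sqrt_sq (by positivity)]
      simp only [map_smul, real_inner_smul_left, real_inner_smul_right, smul_eq_mul,
        abs_mul, abs_inv, abs_norm, ← hΨt, ← hA', ← hf] at key
      rw [hsq] at key
      have h2' : ‖v‖⁻¹ * |f v| ≤
          (c₅ * Ψt ^ (θ + 1 / 2) + c₆) * (‖v‖⁻¹ * Real.sqrt A') := key
      calc |f v| = ‖v‖ * (‖v‖⁻¹ * |f v|) := by field_simp
        _ ≤ ‖v‖ * ((c₅ * Ψt ^ (θ + 1 / 2) + c₆) * (‖v‖⁻¹ * Real.sqrt A')) := by gcongr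
        _ = (c₅ * Ψt ^ (θ + 1 / 2) + c₆) * Real.sqrt A' := by
            field_simp
            try ring
  have hB3 : |deriv (fun s => Ψ (s, q)) t| ≤ c₇ * Ψt ^ (θ + 1) + c₈ := h3 t q
  clear_value A' Ψt e f Dt
  -- basic rpow facts
  have hθ0 : 0 ≤ θ := hθ.1
  have hΨe : Ψt ≤ e := by linarith
  have hA2e : A' ≤ 2 * e := by linarith
  have hRe : R ≤ e := hE
  have hrR : ∀ s : ℝ, 0 ≤ s → R ^ s ≤ e ^ s := fun s hs =>
    Real.rpow_le_rpow hR.le hRe hs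
  have hrpos : ∀ s : ℝ, 0 < R ^ s := fun s => Real.rpow_pos_of_pos hR s
  have hepos : ∀ s : ℝ, 0 < e ^ s := fun s => Real.rpow_pos_of_pos he0 s
  -- e^(θ+1) decompositions
  have hsplit1 : e ^ (θ + 1) = e ^ θ * e := by
    rw [Real.rpow_add he0, Real.rpow_one]
  have hsplit2 : e ^ (θ + 1) = e ^ (θ + 1/2) * e ^ (1/2 : ℝ) := by
    rw [← Real.rpow_add he0]; congr 1; ring
  have hsqrt_e : Real.sqrt e = e ^ (1/2 : ℝ) := Real.sqrt_eq_rpow e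
  have hsqrtA : Real.sqrt A' ≤ Real.sqrt 2 * e ^ (1/2 : ℝ) := by
    rw [← hsqrt_e, ← Real.sqrt_mul (by norm_num : (0:ℝ) ≤ 2)]
    exact Real.sqrt_le_sqrt hA2e
  have hΨθ : Ψt ^ θ ≤ e ^ θ := Real.rpow_le_rpow hΨ0 hΨe hθ0
  have hΨθ2 : Ψt ^ (θ + 1/2) ≤ e ^ (θ + 1/2) := Real.rpow_le_rpow hΨ0 hΨe (by linarith)
  have hΨθ1 : Ψt ^ (θ + 1) ≤ e ^ (θ + 1) := Real.rpow_le_rpow hΨ0 hΨe (by linarith)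
  -- t2 ingredient : e ≤ R^(-θ) * e^(θ+1)
  have ht2 : e ≤ R ^ (-θ) * e ^ (θ + 1) := by
    rw [hsplit1, Real.rpow_neg hR.le]
    have h1' : 1 ≤ (R ^ θ)⁻¹ * e ^ θ := by
      rw [le_inv_mul_iff₀ (hrpos θ), mul_one]
      exact hrR θ hθ0
    calc e = 1 * e := (one_mul e).symm
      _ ≤ ((R ^ θ)⁻¹ * e ^ θ) * e := mul_le_mul_of_nonneg_right h1' he0.le
      _ = (R ^ θ)⁻¹ * (e ^ θ * e) := by ring
  -- t4 ingredient : e^(1/2) ≤ R^(-θ) * R^(-(1:ℝ)/2) * e^(θ+1)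
  have ht4 : e ^ (1/2 : ℝ) ≤ R ^ (-θ) * R ^ (-(1:ℝ)/2) * e ^ (θ + 1) := by
    have hcomb : R ^ (-θ) * R ^ (-(1:ℝ)/2) = (R ^ (θ + 1/2 : ℝ))⁻¹ := by
      rw [← Real.rpow_add hR, ← Real.rpow_neg hR.le]; congr 1; ring
    rw [hcomb, hsplit2]
    have h1' : 1 ≤ (R ^ (θ + 1/2 : ℝ))⁻¹ * e ^ (θ + 1/2 : ℝ) := by
      rw [le_inv_mul_iff₀ (hrpos _), mul_one]
      exact hrR _ (by linarith)
    calc e ^ (1/2 : ℝ) = 1 * e ^ (1/2 : ℝ) := (one_mul _).symm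
      _ ≤ ((R ^ (θ + 1/2 : ℝ))⁻¹ * e ^ (θ + 1/2 : ℝ)) * e ^ (1/2 : ℝ) :=
          mul_le_mul_of_nonneg_right h1' (hepos _).le
      _ = (R ^ (θ + 1/2 : ℝ))⁻¹ * (e ^ (θ + 1/2) * e ^ (1/2 : ℝ)) := by ring
  -- t6 ingredient : 1 ≤ R^(-θ) * R⁻¹ * e^(θ+1)
  have ht6 : 1 ≤ R ^ (-θ) * R⁻¹ * e ^ (θ + 1) := by
    have hcomb : R ^ (-θ) * R⁻¹ = (R ^ (θ + 1 : ℝ))⁻¹ := by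
      rw [← Real.rpow_neg_one R, ← Real.rpow_add hR, ← Real.rpow_neg hR.le]; congr 1; ring
    rw [hcomb, le_inv_mul_iff₀ (hrpos _), mul_one]
    exact hrR _ (by linarith)
  -- term bounds
  have hs2 : (0:ℝ) ≤ Real.sqrt 2 := Real.sqrt_nonneg 2
  have t1 : c₃ * Ψt ^ θ * (A' / 2) ≤ c₃ * e ^ (θ + 1) := by
    rw [hsplit1, ← mul_assoc]
    have := mul_le_mul (mul_le_mul_of_nonneg_left hΨθ hc₃) (by linarith : A' / 2 ≤ e)
      (by linarith) (by positivity)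
    linarith
  have t2 : c₄ * (A' / 2) ≤ c₄ * (R ^ (-θ) * e ^ (θ + 1)) := by
    have : A' / 2 ≤ R ^ (-θ) * e ^ (θ + 1) := le_trans (by linarith) ht2
    exact mul_le_mul_of_nonneg_left this hc₄
  have t3 : c₅ * Ψt ^ (θ + 1/2) * Real.sqrt A' ≤ Real.sqrt 2 * c₅ * e ^ (θ + 1) := by
    calc c₅ * Ψt ^ (θ + 1/2) * Real.sqrt A'
        ≤ c₅ * e ^ (θ + 1/2) * (Real.sqrt 2 * e ^ (1/2 : ℝ)) := by
          apply mul_le_mul (mul_le_mul_of_nonneg_left hΨθ2 hc₅) hsqrtA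
            (Real.sqrt_nonneg _) (by positivity)
      _ = Real.sqrt 2 * c₅ * e ^ (θ + 1) := by rw [hsplit2]; ring
  have t4 : c₆ * Real.sqrt A' ≤ Real.sqrt 2 * R ^ (-θ) * R ^ (-(1:ℝ)/2) * c₆ * e ^ (θ + 1) := by
    calc c₆ * Real.sqrt A' ≤ c₆ * (Real.sqrt 2 * e ^ (1/2 : ℝ)) :=
          mul_le_mul_of_nonneg_left hsqrtA hc₆
      _ ≤ c₆ * (Real.sqrt 2 * (R ^ (-θ) * R ^ (-(1:ℝ)/2) * e ^ (θ + 1))) := by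
          apply mul_le_mul_of_nonneg_left (mul_le_mul_of_nonneg_left ht4 hs2) hc₆
      _ = Real.sqrt 2 * R ^ (-θ) * R ^ (-(1:ℝ)/2) * c₆ * e ^ (θ + 1) := by ring
  have t5 : c₇ * Ψt ^ (θ + 1) ≤ c₇ * e ^ (θ + 1) := mul_le_mul_of_nonneg_left hΨθ1 hc₇
  have t6 : c₈ ≤ R ^ (-θ) * R⁻¹ * c₈ * e ^ (θ + 1) := by
    calc c₈ = c₈ * 1 := (mul_one c₈).symm
      _ ≤ c₈ * (R ^ (-θ) * R⁻¹ * e ^ (θ + 1)) := mul_le_mul_of_nonneg_left ht6 hc₈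
      _ = R ^ (-θ) * R⁻¹ * c₈ * e ^ (θ + 1) := by ring
  -- combine
  have habs : |1 / 2 * ⟪Dt v, v⟫ + f v + deriv (fun s => Ψ (s, q)) t| ≤
      1 / 2 * |⟪Dt v, v⟫| + |f v| + |deriv (fun s => Ψ (s, q)) t| := by
    calc |1 / 2 * ⟪Dt v, v⟫ + f v + deriv (fun s => Ψ (s, q)) t|
        ≤ |1 / 2 * ⟪Dt v, v⟫ + f v| + |deriv (fun s => Ψ (s, q)) t| := abs_add_le _ _
      _ ≤ |1 / 2 * ⟪Dt v, v⟫| + |f v| + |deriv (fun s => Ψ (s, q)) t| := by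
          have := abs_add_le (1 / 2 * ⟪Dt v, v⟫) (f v)
          linarith
      _ = 1 / 2 * |⟪Dt v, v⟫| + |f v| + |deriv (fun s => Ψ (s, q)) t| := by
          rw [abs_mul]; norm_num
  have hsA : (0:ℝ) ≤ Real.sqrt A' := Real.sqrt_nonneg _
  calc |1 / 2 * ⟪Dt v, v⟫ + f v + deriv (fun s => Ψ (s, q)) t|
      ≤ 1 / 2 * |⟪Dt v, v⟫| + |f v| + |deriv (fun s => Ψ (s, q)) t| := habs
    _ ≤ 1 / 2 * ((c₃ * Ψt ^ θ + c₄) * A') + (c₅ * Ψt ^ (θ + 1/2) + c₆) * Real.sqrt A'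
        + (c₇ * Ψt ^ (θ + 1) + c₈) := by
        have := mul_le_mul_of_nonneg_left hB1 (by norm_num : (0:ℝ) ≤ 1/2)
        linarith
    _ = c₃ * Ψt ^ θ * (A' / 2) + c₄ * (A' / 2) + c₅ * Ψt ^ (θ + 1/2) * Real.sqrt A'
        + c₆ * Real.sqrt A' + c₇ * Ψt ^ (θ + 1) + c₈ := by ring
    _ ≤ c₃ * e ^ (θ + 1) + c₄ * (R ^ (-θ) * e ^ (θ + 1)) + Real.sqrt 2 * c₅ * e ^ (θ + 1)
        + Real.sqrt 2 * R ^ (-θ) * R ^ (-(1:ℝ)/2) * c₆ * e ^ (θ + 1)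
        + c₇ * e ^ (θ + 1) + R ^ (-θ) * R⁻¹ * c₈ * e ^ (θ + 1) := by
        linarith
    _ = (c₃ + Real.sqrt 2 * c₅ + c₇ +
          R ^ (-θ) * (c₄ + Real.sqrt 2 * R ^ (-(1:ℝ)/2) * c₆ + R⁻¹ * c₈)) * e ^ (θ + 1) := by
        ring
end
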